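/- With H_0 = (π/N)·σ for σ a diagonal Pauli matrix of Pauli weight at least 3, and F_q the weighted Pauli metric, the minimum over all J ∈ 𝒥 (integer multiples of 2π on the diagonal) of F_q(H_0 − J) is at least (π/N)·q. In particular, taking q exponentially large in n yields a unitary U = e^{−iH_0} whose shortest constant geodesic under F_q has length at least (π/N)·q. -/

import Mathlib

open Finset

/-- Bitwise inner product (number of positions where both bits are 1). -/
def bip {n : ℕ} (i j : Fin n → Bool) : ℕ :=
  (Finset.univ.filter fun k => i k && j k).card

/-- Pauli weight: number of Z factors. -/
def pw {n : ℕ} (j : Fin n → Bool) : ℕ :=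
  (Finset.univ.filter fun k => j k = true).card

/-- Pauli expansion coefficient of the diagonal matrix with diagonal `h`. -/
noncomputable def lam {n : ℕ} (h : (Fin n → Bool) → ℝ) (j : Fin n → Bool) : ℝ :=
  (1 / (2 ^ n : ℝ)) * ∑ i, h i * (-1 : ℝ) ^ bip i j

/-- The 2×2 Pauli Z matrix. -/
def Zmat : Matrix Bool Bool ℝ :=
  Matrix.diagonal fun a => if a then -1 else 1

/-- Tensor product of 2×2 matrices, indexed by bit strings. -/
def tensorProd {n : ℕ} (A : Fin n → Matrix Bool Bool ℝ) :
    Matrix (Fin n → Bool) (Fin n → Bool) ℝ :=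
  fun i i' => ∏ k, A k (i k) (i' k)

/-- The diagonal Pauli matrix σ_j : tensor product of I's and Z's. -/
def sigma {n : ℕ} (j : Fin n → Bool) : Matrix (Fin n → Bool) (Fin n → Bool) ℝ :=
  tensorProd fun k => if j k then Zmat else 1

/-- The weighted Pauli metric F_q on diagonal Hermitians given by their diagonal. -/
noncomputable def Fq {n : ℕ} (q : ℝ) (h : (Fin n → Bool) → ℝ) : ℝ :=
  Real.sqrt ((∑ j ∈ Finset.univ.filter fun j => pw j ≤ 2, (lam h j) ^ 2)
    + q ^ 2 * ∑ j ∈ Finset.univ.filter fun j => 3 ≤ pw j, (lam h j) ^ 2)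

/-! The Pauli coefficient of `H₀ − J` at `j*` is `(π/N)(1 − 2k)` for an integer `k`, since each
`2π jᵥ(i)` contributes `2π/N` times an integer. An odd integer has absolute value at least `1`,
and `F_q` dominates `|q|` times the absolute value of any coefficient of Pauli weight at least `3`. -/

lemma lam_sub {n : ℕ} (h g : (Fin n → Bool) → ℝ) (j : Fin n → Bool) :
    lam (fun i => h i - g i) j = lam h j - lam g j := by
  simp only [lam, sub_mul, sum_sub_distrib, mul_sub]

lemma lam_mul_pauli_self {n : ℕ} (c : ℝ) (j : Fin n → Bool) :
    lam (fun i => c * (-1 : ℝ) ^ bip i j) j = c := by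
  have hsq : ∀ i : Fin n → Bool, c * (-1 : ℝ) ^ bip i j * (-1 : ℝ) ^ bip i j = c := fun i => by
    rw [mul_assoc, ← mul_pow, neg_one_mul, neg_neg, one_pow, mul_one]
  simp only [lam, hsq, sum_const, card_univ, Fintype.card_fun, Fintype.card_bool, Fintype.card_fin,
    nsmul_eq_mul]
  push_cast
  field_simp

lemma lam_mul_intCast {n : ℕ} (a : ℝ) (m : (Fin n → Bool) → ℤ) (j : Fin n → Bool) :
    lam (fun i => a * (m i : ℝ)) j = a / 2 ^ n * ((∑ i, m i * (-1) ^ bip i j : ℤ) : ℝ) := by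
  simp only [lam, mul_assoc, ← mul_sum]
  push_cast
  ring

lemma one_le_abs_one_sub_two_mul_intCast (k : ℤ) : 1 ≤ |(1 : ℝ) - 2 * k| := by
  have hodd : (1 - 2 * k : ℤ) ≠ 0 := by omega
  exact_mod_cast Int.one_le_abs hodd

lemma mul_abs_lam_le_Fq {n : ℕ} (q : ℝ) (h : (Fin n → Bool) → ℝ) {j : Fin n → Bool}
    (hj : 3 ≤ pw j) : |q| * |lam h j| ≤ Fq q h := by
  have hj_le : lam h j ^ 2 ≤ ∑ j ∈ univ.filter fun j => 3 ≤ pw j, lam h j ^ 2 :=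
    single_le_sum (f := fun j => lam h j ^ 2) (fun _ _ => sq_nonneg _) (by simp [hj])
  have hlow : 0 ≤ ∑ j ∈ univ.filter fun j => pw j ≤ 2, lam h j ^ 2 :=
    sum_nonneg fun _ _ => sq_nonneg _
  rw [← abs_mul, ← Real.sqrt_sq_eq_abs, Fq]
  refine Real.sqrt_le_sqrt ?_
  nlinarith [mul_le_mul_of_nonneg_left hj_le (sq_nonneg q)]

theorem stmt3_general {n : ℕ} (q : ℝ) (jstar : Fin n → Bool)
    (hw : 3 ≤ pw jstar) (jv : (Fin n → Bool) → ℤ) :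
    (π / (2 ^ n : ℝ)) * q ≤
      Fq q (fun i => (π / (2 ^ n : ℝ)) * (-1 : ℝ) ^ bip i jstar
        - 2 * π * (jv i : ℝ)) := by
  set k : ℤ := ∑ i, jv i * (-1) ^ bip i jstar
  have hlam : lam (fun i => π / 2 ^ n * (-1 : ℝ) ^ bip i jstar - 2 * π * (jv i : ℝ)) jstar
      = π / 2 ^ n * (1 - 2 * k) := by
    rw [lam_sub, lam_mul_pauli_self, lam_mul_intCast]
    ring
  calc π / 2 ^ n * q ≤ |q| * |π / 2 ^ n| := by
        rw [mul_comm, ← abs_mul]; exact le_abs_self _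
    _ ≤ |q| * |π / 2 ^ n * (1 - 2 * k)| := by
        rw [abs_mul (π / 2 ^ n)]
        gcongr
        exact le_mul_of_one_le_right (abs_nonneg _) (one_le_abs_one_sub_two_mul_intCast k)
    _ ≤ _ := hlam ▸ mul_abs_lam_le_Fq q _ hw

/-- with H₀ = (π/N)·σ_{j*} for a diagonal Pauli matrix σ_{j*} of
Pauli weight ≥ 3, every constant geodesic Hamiltonian H₀ − J (J in the integer
lattice 𝒥) satisfies F_q(H₀ − J) ≥ (π/N)·q, so the shortest constant geodesic
from I to U = e^{−iH₀} has length at least (π/N)·q. -/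
theorem stmt3 {n : ℕ} (q : ℝ) (hq : 0 ≤ q) (jstar : Fin n → Bool)
    (hw : 3 ≤ pw jstar) (jv : (Fin n → Bool) → ℤ) :
    (π / (2 ^ n : ℝ)) * q ≤
      Fq q (fun i => (π / (2 ^ n : ℝ)) * (-1 : ℝ) ^ bip i jstar
        - 2 * π * (jv i : ℝ)) :=
  stmt3_general q jstar hw jv
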